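/- arXiv:2503.10611 — 5 statements merged into one kernel-verified Lean document; each statement's English description precedes it below -/
import Mathlib

section
/- Let K : [0,∞) → ℝ be continuous with K(0) > K(r) for all r > 0, and suppose that for all a > 0 the improper integral ∫₀^a dr / √(K(0) − K(r)) diverges (equals +∞). If γ : [0,T) → ℝ is a piecewise C¹ curve with γ(t) > 0 for all t and lim_{t→T} γ(t) = 0, then ∫₀^T |γ'(t)| / √(2(K(0) − K(γ(t)))) dt = +∞. -/
open MeasureTheory Set Filter

/-- If `K` is continuous with `K 0 > K r` for `r > 0` and
`∫₀^a dr / √(K 0 - K r) = ∞` for all `a > 0`, then any (piecewise) differentiable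
curve `γ : [0,T) → (0,∞)` with `γ t → 0` as `t → T` satisfies
`∫₀^T |γ'| / √(2 (K 0 - K ∘ γ)) dt = ∞`. -/
theorem length_lower_bound_infinite (K : ℝ → ℝ)
    (hKcont : ContinuousOn K (Set.Ici 0))
    (hKdec : ∀ r > (0 : ℝ), K 0 > K r)
    (hdiv : ∀ a > (0 : ℝ),
      ∫⁻ r in Set.Ioc (0 : ℝ) a, ENNReal.ofReal (1 / Real.sqrt (K 0 - K r)) = ⊤)
    (T : ℝ) (hT : 0 < T) (γ γ' : ℝ → ℝ)
    (hγ : ∀ t ∈ Set.Ico (0 : ℝ) T, HasDerivAt γ (γ' t) t)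
    (hγpos : ∀ t ∈ Set.Ico (0 : ℝ) T, 0 < γ t)
    (hγ0 : Tendsto γ (nhdsWithin T (Set.Iio T)) (nhds 0)) :
    ∫⁻ t in Set.Ioo (0 : ℝ) T,
      ENNReal.ofReal (|γ' t| / Real.sqrt (2 * (K 0 - K (γ t)))) = ⊤ := by
  by_contra hI
  -- a continuous extension of K to all of ℝ
  set Kc : ℝ → ℝ := fun r => K (max r 0) with hKcdef
  have hKcCont : Continuous Kc :=
    hKcont.comp_continuous (continuous_id.max continuous_const) fun x => le_max_right x 0
  have hKcEq : ∀ r : ℝ, 0 ≤ r → Kc r = K r := by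
    intro r hr; simp only [hKcdef, max_eq_left hr]
  -- the kernel function g
  set g : ℝ → ℝ := fun r => 1 / Real.sqrt (K 0 - Kc r) with hgdef
  have hgmeas : Measurable g :=
    measurable_const.div (Real.continuous_sqrt.comp (continuous_const.sub hKcCont)).measurable
  have hgnonneg : ∀ r, 0 ≤ g r := fun r => by
    simp only [hgdef]; positivity
  have hKlt : ∀ r : ℝ, 0 < r → Kc r < K 0 := fun r hr => by
    rw [hKcEq r hr.le]; exact hKdec r hr
  have hgcont : ∀ x : ℝ, 0 < x → ContinuousAt g x := by
    intro x hx
    have h1 : ContinuousAt (fun r => Real.sqrt (K 0 - Kc r)) x :=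
      (Real.continuous_sqrt.comp (continuous_const.sub hKcCont)).continuousAt
    exact continuousAt_const.div h1
      (Real.sqrt_pos.mpr (sub_pos.mpr (hKlt x hx))).ne'
  have hgcontOn : ContinuousOn g (Set.Ioi 0) := fun x hx =>
    (hgcont x hx).continuousWithinAt
  -- the base point
  set a : ℝ := γ 0 with hadef
  have ha : 0 < a := hγpos 0 ⟨le_refl 0, hT⟩
  -- relate the given integrand to g
  have hpt : ∀ t ∈ Set.Ioo (0 : ℝ) T,
      ENNReal.ofReal (g (γ t) * |γ' t|)
        = ENNReal.ofReal (Real.sqrt 2)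
            * ENNReal.ofReal (|γ' t| / Real.sqrt (2 * (K 0 - K (γ t)))) := by
    intro t ht
    rw [← ENNReal.ofReal_mul (Real.sqrt_nonneg 2)]
    congr 1
    have hpos := hγpos t ⟨ht.1.le, ht.2⟩
    have : Kc (γ t) = K (γ t) := hKcEq _ hpos.le
    rw [Real.sqrt_mul (by norm_num : (0:ℝ) ≤ 2)]
    simp only [hgdef, this]
    rcases eq_or_ne (Real.sqrt (K 0 - K (γ t))) 0 with h | h
    · simp [h]
    · field_simp
  -- the auxiliary integral J
  set J : ENNReal := ∫⁻ t in Set.Ioo (0 : ℝ) T, ENNReal.ofReal (g (γ t) * |γ' t|) with hJdef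
  have hJeq : J = ENNReal.ofReal (Real.sqrt 2)
      * ∫⁻ t in Set.Ioo (0 : ℝ) T,
          ENNReal.ofReal (|γ' t| / Real.sqrt (2 * (K 0 - K (γ t)))) := by
    rw [hJdef, ← lintegral_const_mul' _ _ ENNReal.ofReal_ne_top]
    exact setLIntegral_congr_fun measurableSet_Ioo hpt
  have hJ : J ≠ ⊤ := by
    rw [hJeq]
    exact ENNReal.mul_ne_top ENNReal.ofReal_ne_top hI
  -- the potential function G
  set G : ℝ → ℝ := fun x => ∫ r in a..x, g r with hGdef
  have hGderiv : ∀ x : ℝ, 0 < x → HasDerivAt G (g x) x := by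
    intro x hx
    apply intervalIntegral.integral_hasDerivAt_right
    · apply ContinuousOn.intervalIntegrable
      apply hgcontOn.mono
      intro y hy
      rcases hy with ⟨h1, _⟩
      have : (0:ℝ) < min a x := lt_min ha hx
      exact lt_of_lt_of_le this h1
    · exact hgmeas.stronglyMeasurable.stronglyMeasurableAtFilter
    · exact hgcont x hx
  -- key bound : for any x > 0 the lintegral of g over Ioc x a is at most J
  have key : ∀ x : ℝ, 0 < x →
      (∫⁻ r in Set.Ioc x a, ENNReal.ofReal (g r)) ≤ J := by
    intro x hx
    -- find t ∈ (0, T) with γ t < x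
    have h1 : ∀ᶠ t in nhdsWithin T (Set.Iio T), γ t < x := hγ0.eventually_lt_const hx
    have h2 : ∀ᶠ t in nhdsWithin T (Set.Iio T), 0 < t :=
      eventually_nhdsWithin_of_eventually_nhds (eventually_gt_nhds hT)
    have h3 : ∀ᶠ t in nhdsWithin T (Set.Iio T), t < T :=
      eventually_mem_nhdsWithin.mono fun t ht => ht
    obtain ⟨t, hγtx, ht0, htT⟩ := (h1.and (h2.and h3)).exists
    have hsub : Set.Ioc x a ⊆ Set.Ioc (γ t) a :=
      Set.Ioc_subset_Ioc_left hγtx.le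
    refine le_trans (lintegral_mono_set hsub) ?_
    rcases le_or_gt (γ t) a with hta | hta
    swap
    · rw [Set.Ioc_eq_empty (not_lt.mpr hta.le)]
      simp
    -- main case : γ t ≤ a
    have hγt0 : 0 < γ t := hγpos t ⟨ht0.le, htT⟩
    -- FTC for G ∘ γ on [0, t]
    set φ : ℝ → ℝ := fun s => g (γ s) * γ' s with hφdef
    have hmem : ∀ s ∈ Set.Icc (0:ℝ) t, s ∈ Set.Ico (0:ℝ) T :=
      fun s hs => ⟨hs.1, lt_of_le_of_lt hs.2 htT⟩
    have hderiv : ∀ s ∈ Set.uIcc (0:ℝ) t, HasDerivAt (fun u => G (γ u)) (φ s) s := by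
      intro s hs
      rw [Set.uIcc_of_le ht0.le] at hs
      exact (hGderiv (γ s) (hγpos s (hmem s hs))).comp s (hγ s (hmem s hs))
    have hIocsub : Set.Ioc (0:ℝ) t ⊆ Set.Ioo (0:ℝ) T :=
      fun s hs => ⟨hs.1, lt_of_le_of_lt hs.2 htT⟩
    have hφnorm : ∀ s, ENNReal.ofReal |φ s| = ENNReal.ofReal (g (γ s) * |γ' s|) := by
      intro s
      rw [hφdef]
      congr 1
      rw [abs_mul, abs_of_nonneg (hgnonneg _)]
    have hφlint : (∫⁻ s in Set.Ioc (0:ℝ) t, ENNReal.ofReal |φ s|) ≤ J := by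
      calc (∫⁻ s in Set.Ioc (0:ℝ) t, ENNReal.ofReal |φ s|)
          = ∫⁻ s in Set.Ioc (0:ℝ) t, ENNReal.ofReal (g (γ s) * |γ' s|) := by
            exact lintegral_congr fun s => hφnorm s
        _ ≤ J := lintegral_mono_set hIocsub
    have hφmeas : AEStronglyMeasurable φ (volume.restrict (Set.Ioc (0:ℝ) t)) := by
      have hγcont : ContinuousOn γ (Set.Ioc 0 t) := fun s hs =>
        ((hγ s (hmem s (Set.Ioc_subset_Icc_self hs))).continuousAt).continuousWithinAt
      have h1 : AEMeasurable (fun s => g (γ s)) (volume.restrict (Set.Ioc (0:ℝ) t)) := by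
        have : ContinuousOn (fun s => g (γ s)) (Set.Ioc 0 t) :=
          hgcontOn.comp hγcont fun s hs =>
            Set.mem_Ioi.mpr (hγpos s (hmem s (Set.Ioc_subset_Icc_self hs)))
        exact this.aemeasurable measurableSet_Ioc
      have h2 : AEMeasurable (fun s => g (γ s) * deriv γ s)
          (volume.restrict (Set.Ioc (0:ℝ) t)) :=
        h1.mul (measurable_deriv γ).aemeasurable
      have h3 : φ =ᵐ[volume.restrict (Set.Ioc (0:ℝ) t)]
          fun s => g (γ s) * deriv γ s := by
        filter_upwards [ae_restrict_mem measurableSet_Ioc] with s hs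
        show g (γ s) * γ' s = g (γ s) * deriv γ s
        rw [(hγ s (hmem s (Set.Ioc_subset_Icc_self hs))).deriv]
      exact (h2.congr h3.symm).aestronglyMeasurable
    have hφint : IntervalIntegrable φ volume 0 t := by
      rw [intervalIntegrable_iff_integrableOn_Ioc_of_le ht0.le]
      refine ⟨hφmeas, ?_⟩
      rw [hasFiniteIntegral_iff_norm]
      refine lt_of_le_of_lt ?_ (lt_top_iff_ne_top.mpr hJ)
      refine le_trans (le_of_eq ?_) hφlint
      exact lintegral_congr fun s => by rw [Real.norm_eq_abs]
    have hftc : ∫ s in (0:ℝ)..t, φ s = G (γ t) - G (γ 0) :=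
      intervalIntegral.integral_eq_sub_of_hasDerivAt hderiv hφint
    have hGa : G (γ 0) = 0 := by
      rw [hGdef, ← hadef]; exact intervalIntegral.integral_same
    -- the real integral of g over Ioc (γ t) a equals -G (γ t)
    have hgia : IntegrableOn g (Set.Ioc (γ t) a) := by
      refine (ContinuousOn.integrableOn_Icc ?_).mono_set Set.Ioc_subset_Icc_self
      apply hgcontOn.mono
      intro y hy
      exact lt_of_lt_of_le hγt0 hy.1
    have hGval : ∫ r in Set.Ioc (γ t) a, g r = -G (γ t) := by
      rw [hGdef]
      rw [← intervalIntegral.integral_of_le hta]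
      rw [← intervalIntegral.integral_symm]
    -- bound the real integral
    have hbound : ∫ r in Set.Ioc (γ t) a, g r ≤ ∫ s in Set.Ioc (0:ℝ) t, |φ s| := by
      have hGt : G (γ t) = ∫ s in (0:ℝ)..t, φ s := by linarith [hftc, hGa]
      rw [hGval, hGt]
      have h4 : -∫ s in (0:ℝ)..t, φ s ≤ |∫ s in (0:ℝ)..t, φ s| := neg_le_abs _
      refine le_trans h4 ?_
      have h5 := intervalIntegral.abs_integral_le_integral_abs (μ := volume) (f := φ) ht0.le
      refine le_trans h5 (le_of_eq ?_)
      rw [intervalIntegral.integral_of_le ht0.le]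
    -- convert to lintegrals
    have habs_int : IntegrableOn (fun s => |φ s|) (Set.Ioc (0:ℝ) t) := by
      have := (intervalIntegrable_iff_integrableOn_Ioc_of_le ht0.le).mp hφint
      exact this.abs
    calc (∫⁻ r in Set.Ioc (γ t) a, ENNReal.ofReal (g r))
        = ENNReal.ofReal (∫ r in Set.Ioc (γ t) a, g r) :=
          (ofReal_integral_eq_lintegral_ofReal hgia
            (Filter.Eventually.of_forall fun r => hgnonneg r)).symm
      _ ≤ ENNReal.ofReal (∫ s in Set.Ioc (0:ℝ) t, |φ s|) :=
          ENNReal.ofReal_le_ofReal hbound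
      _ = ∫⁻ s in Set.Ioc (0:ℝ) t, ENNReal.ofReal |φ s| :=
          ofReal_integral_eq_lintegral_ofReal habs_int
            (Filter.Eventually.of_forall fun s => abs_nonneg _)
      _ ≤ J := hφlint
  -- monotone convergence: lintegral over Ioc 0 a is the sup over Ioc (a/(n+1)) a
  set f : ℝ → ENNReal := fun r => ENNReal.ofReal (g r) with hfdef
  have hfmeas : Measurable f := ENNReal.measurable_ofReal.comp hgmeas
  set F : ℕ → ℝ → ENNReal := fun n => (Set.Ioc (a / (n + 1)) a).indicator f with hFdef
  have hFmeas : ∀ n, Measurable (F n) := fun n =>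
    hfmeas.indicator measurableSet_Ioc
  have hFmono : Monotone F := by
    intro n m hnm
    apply Set.indicator_le_indicator_of_subset
    · apply Set.Ioc_subset_Ioc_left
      apply div_le_div_of_nonneg_left ha.le
      · positivity
      · exact_mod_cast Nat.add_le_add_right hnm 1
    · intro r; exact zero_le
  have hsup : ∀ r, (⨆ n, F n r) = (Set.Ioc (0:ℝ) a).indicator f r := by
    intro r
    rcases em (r ∈ Set.Ioc (0:ℝ) a) with hr | hr
    · obtain ⟨n, hn⟩ := exists_nat_gt (a / r)
      have hn' : a / (n + 1) < r := by
        rw [div_lt_iff₀ (by positivity)]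
        rw [div_lt_iff₀ hr.1] at hn
        nlinarith [hr.1]
      have hmem : r ∈ Set.Ioc (a / (n + 1)) a := ⟨hn', hr.2⟩
      apply le_antisymm
      · apply iSup_le
        intro m
        rcases em (r ∈ Set.Ioc (a / (m + 1)) a) with hm | hm
        · rw [hFdef]; simp only [Set.indicator_of_mem hm, Set.indicator_of_mem hr]; exact le_rfl
        · rw [hFdef]; simp only [Set.indicator_of_notMem hm]; exact zero_le
      · refine le_iSup_of_le n ?_
        rw [hFdef]; simp only [Set.indicator_of_mem hmem, Set.indicator_of_mem hr]; exact le_rfl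
    · rw [Set.indicator_of_notMem hr]
      apply le_antisymm _ zero_le
      apply iSup_le
      intro n
      have : r ∉ Set.Ioc (a / (n + 1)) a := by
        intro hmem
        exact hr ⟨lt_of_le_of_lt (by positivity) hmem.1, hmem.2⟩
      rw [hFdef]; simp [Set.indicator_of_notMem this]
  have hfinal : (∫⁻ r in Set.Ioc (0:ℝ) a, f r) ≤ J := by
    rw [← lintegral_indicator measurableSet_Ioc]
    have : ∫⁻ r, (Set.Ioc (0:ℝ) a).indicator f r = ⨆ n, ∫⁻ r, F n r := by
      rw [← lintegral_iSup hFmeas hFmono]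
      exact lintegral_congr fun r => (hsup r).symm
    rw [this]
    apply iSup_le
    intro n
    rw [hFdef]
    simp only [lintegral_indicator measurableSet_Ioc]
    exact key (a / (n + 1)) (by positivity)
  -- contradiction with divergence
  have hcongr : (∫⁻ r in Set.Ioc (0:ℝ) a, ENNReal.ofReal (1 / Real.sqrt (K 0 - K r)))
      = ∫⁻ r in Set.Ioc (0:ℝ) a, f r := by
    apply setLIntegral_congr_fun measurableSet_Ioc
    intro r hr
    rw [hfdef]
    simp only [hgdef, hKcEq r hr.1.le]
  have := hdiv a ha
  rw [hcongr] at this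
  rw [this] at hfinal
  exact hJ (top_le_iff.mp hfinal)
end

section
/- Let b, T > 0 and define, on [0, T): x₁(t) = log cosh(b(T−t)), x₂(t) = −log cosh(b(T−t)), p₁(t) = −b / tanh(b(T−t)), p₂(t) = b / tanh(b(T−t)). Then (x₁, x₂, p₁, p₂) satisfies the Hamiltonian system dx₁/dt = K(0)p₁ + K(|x₁−x₂|)p₂, dx₂/dt = K(|x₁−x₂|)p₁ + K(0)p₂, dp₁/dt = −K'(|x₁−x₂|) · sgn(x₁−x₂) · p₁p₂, dp₂/dt = K'(|x₁−x₂|) · sgn(x₁−x₂) · p₁p₂, with K(r) = exp(−r). Moreover x₁(t) → 0 and x₂(t) → 0 as t → T, while p₁(t) → −∞ and p₂(t) → +∞. -/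
open Set Filter Real

/-- Explicit two-landmark solution for the Laplacian kernel `K r = exp (-r)` in
`ℝ` that collides in finite time `T` with blow-up of the momenta. -/
theorem laplacian_kernel_explicit_collision (b T : ℝ) (hb : 0 < b) (hT : 0 < T)
    (K : ℝ → ℝ) (hK : K = fun r => Real.exp (-r))
    (x₁ x₂ p₁ p₂ : ℝ → ℝ)
    (hx₁ : ∀ t, x₁ t = Real.log (Real.cosh (b * (T - t))))
    (hx₂ : ∀ t, x₂ t = -Real.log (Real.cosh (b * (T - t))))
    (hp₁ : ∀ t, p₁ t = -b / Real.tanh (b * (T - t)))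
    (hp₂ : ∀ t, p₂ t = b / Real.tanh (b * (T - t))) :
    (∀ t ∈ Set.Ico (0 : ℝ) T,
      HasDerivAt x₁ (K 0 * p₁ t + K |x₁ t - x₂ t| * p₂ t) t ∧
      HasDerivAt x₂ (K |x₁ t - x₂ t| * p₁ t + K 0 * p₂ t) t ∧
      HasDerivAt p₁ (-(deriv K |x₁ t - x₂ t| * Real.sign (x₁ t - x₂ t) *
        (p₁ t * p₂ t))) t ∧
      HasDerivAt p₂ (deriv K |x₁ t - x₂ t| * Real.sign (x₁ t - x₂ t) *
        (p₁ t * p₂ t)) t) ∧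
    Tendsto x₁ (nhdsWithin T (Set.Iio T)) (nhds 0) ∧
    Tendsto x₂ (nhdsWithin T (Set.Iio T)) (nhds 0) ∧
    Tendsto p₁ (nhdsWithin T (Set.Iio T)) atBot ∧
    Tendsto p₂ (nhdsWithin T (Set.Iio T)) atTop := by
  have hK0 : K 0 = 1 := by rw [hK]; simp
  have hderivK : ∀ x : ℝ, deriv K x = -Real.exp (-x) := by
    intro x
    rw [hK]
    have h : HasDerivAt (fun r => Real.exp (-r)) (Real.exp (-x) * (-1)) x :=
      (Real.hasDerivAt_exp (-x)).comp x ((hasDerivAt_id x).neg)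
    simpa using h.deriv
  have hx₁f : x₁ = fun u => Real.log (Real.cosh (b * (T - u))) := funext hx₁
  have hx₂f : x₂ = fun u => -Real.log (Real.cosh (b * (T - u))) := funext hx₂
  have hp₁f : p₁ = fun u => -b / Real.tanh (b * (T - u)) := funext hp₁
  have hp₂f : p₂ = fun u => b / Real.tanh (b * (T - u)) := funext hp₂
  constructor
  · intro t ht
    have hspos : 0 < b * (T - t) := mul_pos hb (sub_pos.2 ht.2)
    set s := b * (T - t) with hs
    have hsinh : 0 < Real.sinh s := Real.sinh_pos_iff.2 hspos
    have hcosh0 : 0 < Real.cosh s := Real.cosh_pos s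
    have hsq : Real.cosh s ^ 2 - Real.sinh s ^ 2 = 1 := Real.cosh_sq_sub_sinh_sq s
    have hcosh1 : 1 < Real.cosh s := by nlinarith
    have hlogpos : 0 < Real.log (Real.cosh s) := Real.log_pos hcosh1
    have habs : |x₁ t - x₂ t| = 2 * Real.log (Real.cosh s) := by
      rw [hx₁ t, hx₂ t, ← hs]
      rw [abs_of_pos (by linarith)]
      ring
    have hsign : Real.sign (x₁ t - x₂ t) = 1 := by
      apply Real.sign_of_pos
      rw [hx₁ t, hx₂ t, ← hs]; linarith
    have hKabs : K |x₁ t - x₂ t| = (Real.cosh s ^ 2)⁻¹ := by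
      rw [habs, hK]
      simp only
      rw [show -(2 * Real.log (Real.cosh s)) = Real.log ((Real.cosh s ^ 2)⁻¹) by
        rw [Real.log_inv, Real.log_pow]; push_cast; ring]
      exact Real.exp_log (by positivity)
    have hderivKabs : deriv K |x₁ t - x₂ t| = -(Real.cosh s ^ 2)⁻¹ := by
      rw [hderivK, habs]
      rw [show -(2 * Real.log (Real.cosh s)) = Real.log ((Real.cosh s ^ 2)⁻¹) by
        rw [Real.log_inv, Real.log_pow]; push_cast; ring]
      rw [Real.exp_log (by positivity)]
    have htanh : Real.tanh s = Real.sinh s / Real.cosh s := Real.tanh_eq_sinh_div_cosh s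
    have htanh0 : Real.tanh s ≠ 0 := by
      rw [htanh]; positivity
    have hf : HasDerivAt (fun u : ℝ => b * (T - u)) (-b) t := by
      simpa using ((hasDerivAt_const t T).sub (hasDerivAt_id t)).const_mul b
    have hcf : HasDerivAt (fun u => Real.cosh (b * (T - u))) (Real.sinh s * (-b)) t :=
      by have := (Real.hasDerivAt_cosh s).comp t hf; exact this
    have hsf : HasDerivAt (fun u => Real.sinh (b * (T - u))) (Real.cosh s * (-b)) t :=
      by have := (Real.hasDerivAt_sinh s).comp t hf; exact this
    have hlog : HasDerivAt (fun u => Real.log (Real.cosh (b * (T - u))))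
        ((Real.cosh s)⁻¹ * (Real.sinh s * (-b))) t :=
      by have := (Real.hasDerivAt_log (ne_of_gt hcosh0)).comp t hcf; exact this
    -- derivative of cosh/sinh quotient: for p₂ = b / tanh = b*cosh/sinh
    have hquot : HasDerivAt (fun u => b * Real.cosh (b * (T - u)) / Real.sinh (b * (T - u)))
        ((b * (Real.sinh s * (-b)) * Real.sinh s - b * Real.cosh s * (Real.cosh s * (-b))) /
          Real.sinh s ^ 2) t :=
      (hcf.const_mul b).div hsf (ne_of_gt hsinh)
    have hp₂eq : p₂ = fun u => b * Real.cosh (b * (T - u)) / Real.sinh (b * (T - u)) := by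
      rw [hp₂f]
      funext u
      rw [Real.tanh_eq_sinh_div_cosh, div_div_eq_mul_div]
    have hp₁eq : p₁ = fun u => -(b * Real.cosh (b * (T - u)) / Real.sinh (b * (T - u))) := by
      rw [hp₁f]
      funext u
      rw [Real.tanh_eq_sinh_div_cosh, neg_div, div_div_eq_mul_div]
    have h1 : HasDerivAt x₁ ((Real.cosh s)⁻¹ * (Real.sinh s * (-b))) t := hx₁f ▸ hlog
    have h2 : HasDerivAt x₂ (-((Real.cosh s)⁻¹ * (Real.sinh s * (-b)))) t := hx₂f ▸ hlog.neg
    have h3 : HasDerivAt p₁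
        (-((b * (Real.sinh s * (-b)) * Real.sinh s - b * Real.cosh s * (Real.cosh s * (-b))) /
          Real.sinh s ^ 2)) t := hp₁eq ▸ hquot.neg
    have h4 : HasDerivAt p₂
        ((b * (Real.sinh s * (-b)) * Real.sinh s - b * Real.cosh s * (Real.cosh s * (-b))) /
          Real.sinh s ^ 2) t := hp₂eq ▸ hquot
    refine ⟨?_, ?_, ?_, ?_⟩
    · convert h1 using 1
      rw [hK0, hKabs, hp₁ t, hp₂ t, ← hs, htanh]
      field_simp
      linear_combination (-1) * hsq
    · convert h2 using 1
      rw [hK0, hKabs, hp₁ t, hp₂ t, ← hs, htanh]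
      field_simp
      linear_combination (1) * hsq
    · convert h3 using 1
      rw [hderivKabs, hsign, hp₁ t, hp₂ t, ← hs, htanh]
      field_simp
      linear_combination (1) * hsq
    · convert h4 using 1
      rw [hderivKabs, hsign, hp₁ t, hp₂ t, ← hs, htanh]
      field_simp
      linear_combination (-1) * hsq
  · have harg : Tendsto (fun t => b * (T - t)) (nhdsWithin T (Set.Iio T)) (nhds 0) := by
      have : Tendsto (fun t : ℝ => b * (T - t)) (nhds T) (nhds (b * (T - T))) := by
        exact (tendsto_const_nhds.sub tendsto_id).const_mul b
      simpa using this.mono_left nhdsWithin_le_nhds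
    have hargpos : Tendsto (fun t => b * (T - t)) (nhdsWithin T (Set.Iio T))
        (nhdsWithin 0 (Set.Ioi 0)) := by
      apply tendsto_nhdsWithin_of_tendsto_nhds_of_eventually_within _ harg
      filter_upwards [self_mem_nhdsWithin] with t ht
      exact mul_pos hb (sub_pos.2 ht)
    have htanh0 : Tendsto (fun t => Real.tanh (b * (T - t))) (nhdsWithin T (Set.Iio T))
        (nhdsWithin 0 (Set.Ioi 0)) := by
      apply tendsto_nhdsWithin_of_tendsto_nhds_of_eventually_within
      · have hc : Continuous Real.tanh := by
          rw [show Real.tanh = fun y => Real.sinh y / Real.cosh y from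
            funext Real.tanh_eq_sinh_div_cosh]
          exact Real.continuous_sinh.div Real.continuous_cosh fun x => (Real.cosh_pos x).ne'
        have h := (hc.tendsto 0).comp harg
        simpa [Real.tanh_zero, Function.comp_def] using h
      · filter_upwards [self_mem_nhdsWithin] with t ht
        have hp : 0 < b * (T - t) := mul_pos hb (sub_pos.2 ht)
        have : 0 < Real.tanh (b * (T - t)) := by
          rw [Real.tanh_eq_sinh_div_cosh]
          exact div_pos (Real.sinh_pos_iff.2 hp) (Real.cosh_pos _)
        exact this
    have hcont : Tendsto (fun y => Real.log (Real.cosh y)) (nhds 0) (nhds 0) := by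
      have h1 : ContinuousAt (fun y => Real.log (Real.cosh y)) 0 :=
        (Real.continuousAt_log (by simp)).comp Real.continuous_cosh.continuousAt
      simpa using h1.tendsto
    have hx₁lim : Tendsto x₁ (nhdsWithin T (Set.Iio T)) (nhds 0) := by
      rw [funext hx₁]; exact hcont.comp harg
    have hx₂lim : Tendsto x₂ (nhdsWithin T (Set.Iio T)) (nhds 0) := by
      rw [funext hx₂]
      simpa using (hcont.comp harg).neg
    have hinv : Tendsto (fun t => (Real.tanh (b * (T - t)))⁻¹) (nhdsWithin T (Set.Iio T))
        atTop := tendsto_inv_nhdsGT_zero.comp htanh0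
    have hp₂lim : Tendsto p₂ (nhdsWithin T (Set.Iio T)) atTop := by
      rw [funext hp₂]
      simp only [div_eq_mul_inv]
      exact hinv.const_mul_atTop hb
    have hp₁lim : Tendsto p₁ (nhdsWithin T (Set.Iio T)) atBot := by
      rw [funext hp₁]
      have : (fun u => -b / Real.tanh (b * (T - u))) =
          fun u => -(b * (Real.tanh (b * (T - u)))⁻¹) := by
        funext u; rw [neg_div, div_eq_mul_inv]
      rw [this]
      exact tendsto_neg_atTop_atBot.comp (hinv.const_mul_atTop hb)
    exact ⟨hx₁lim, hx₂lim, hp₁lim, hp₂lim⟩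
end

section
/- Consider the Hamiltonian system for n landmarks with dp_i/dt = −Σ_{j≠i} K'(‖x_i − x_j‖) ((x_i − x_j)/‖x_i − x_j‖) ⟨p_i, p_j⟩ along a solution on [0,T) where all x_j, p_j : [0,T) → ℝ^d are continuous and x_i(t) ≠ x_j(t) for i ≠ j. If p_i(0) = 0 for some index i, then p_i(t) = 0 for all t ∈ [0,T). -/
open Set Filter Finset

/-- If a momentum starts at zero, it stays zero: for the landmark momentum
equations with continuous coefficients, `pᵢ 0 = 0` implies `pᵢ t = 0` for all
`t ∈ [0,T)`. -/
theorem momentum_zero_stays_zero (n d : ℕ) (K K' : ℝ → ℝ)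
    (hKsmooth : ContDiffOn ℝ (⊤ : ℕ∞) K (Set.Ioi 0))
    (hK' : ∀ r > (0 : ℝ), HasDerivAt K (K' r) r)
    (T : ℝ) (hT : 0 < T)
    (x p : Fin n → ℝ → EuclideanSpace ℝ (Fin d))
    (hxcont : ∀ j, ContinuousOn (x j) (Set.Ico 0 T))
    (hpcont : ∀ j, ContinuousOn (p j) (Set.Ico 0 T))
    (hsep : ∀ i j, i ≠ j → ∀ t ∈ Set.Ico (0 : ℝ) T, x i t ≠ x j t)
    (hp : ∀ i, ∀ t ∈ Set.Ico (0 : ℝ) T,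
      HasDerivAt (p i)
        (-∑ j ∈ Finset.univ.erase i,
          (K' ‖x i t - x j t‖ * (inner ℝ (p i t) (p j t) : ℝ) / ‖x i t - x j t‖) •
            (x i t - x j t)) t)
    (i : Fin n) (hi0 : p i 0 = 0) :
    ∀ t ∈ Set.Ico (0 : ℝ) T, p i t = 0 := by
  -- K' is continuous on (0, ∞)
  have hK'cont : ContinuousOn K' (Set.Ioi 0) := by
    have h1 : ContinuousOn (derivWithin K (Set.Ioi 0)) (Set.Ioi 0) :=
      hKsmooth.continuousOn_derivWithin isOpen_Ioi.uniqueDiffOn (by simp)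
    refine h1.congr fun r hr => ?_
    exact ((hK' r hr).hasDerivWithinAt.derivWithin
      (isOpen_Ioi.uniqueDiffWithinAt hr)).symm
  intro t ht
  obtain ⟨ht0, htT⟩ := ht
  have hsub : Set.Icc (0:ℝ) t ⊆ Set.Ico 0 T := fun s hs => ⟨hs.1, lt_of_le_of_lt hs.2 htT⟩
  have hrpos : ∀ j, j ∈ Finset.univ.erase i → ∀ s ∈ Set.Icc (0:ℝ) t,
      (0:ℝ) < ‖x i s - x j s‖ := by
    intro j hj s hs
    have hji : j ≠ i := Finset.ne_of_mem_erase hj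
    rw [norm_pos_iff, sub_ne_zero]
    exact hsep i j hji.symm s (hsub hs)
  set L : ℝ → ℝ := fun s => ∑ j ∈ Finset.univ.erase i,
      |K' ‖x i s - x j s‖| * ‖p j s‖ with hLdef
  have hLcont : ContinuousOn L (Set.Icc 0 t) := by
    apply continuousOn_finset_sum
    intro j hj
    have hx : ContinuousOn (fun s => ‖x i s - x j s‖) (Set.Icc 0 t) :=
      (((hxcont i).mono hsub).sub ((hxcont j).mono hsub)).norm
    have hmem : ∀ s ∈ Set.Icc (0:ℝ) t, ‖x i s - x j s‖ ∈ Set.Ioi (0:ℝ) :=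
      fun s hs => hrpos j hj s hs
    exact ((hK'cont.comp hx hmem).abs).mul ((hpcont j).mono hsub).norm
  obtain ⟨C, hC⟩ := isCompact_Icc.exists_bound_of_continuousOn hLcont
  have hfc : ContinuousOn (p i) (Set.Icc 0 t) := (hpcont i).mono hsub
  have hfd : ∀ s ∈ Set.Ico 0 t,
      HasDerivWithinAt (p i)
        ((fun s => -∑ j ∈ Finset.univ.erase i,
          (K' ‖x i s - x j s‖ * (inner ℝ (p i s) (p j s) : ℝ) / ‖x i s - x j s‖) •
            (x i s - x j s)) s) (Set.Ici s) s :=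
    fun s hs => (hp i s (hsub ⟨hs.1, hs.2.le⟩)).hasDerivWithinAt
  have hbnd : ∀ s ∈ Set.Ico 0 t,
      ‖-∑ j ∈ Finset.univ.erase i,
          (K' ‖x i s - x j s‖ * (inner ℝ (p i s) (p j s) : ℝ) / ‖x i s - x j s‖) •
            (x i s - x j s)‖ ≤ C * ‖p i s‖ + 0 := by
    intro s hs
    have hsmem : s ∈ Set.Icc (0:ℝ) t := ⟨hs.1, hs.2.le⟩
    rw [norm_neg, add_zero]
    calc ‖∑ j ∈ Finset.univ.erase i,
          (K' ‖x i s - x j s‖ * (inner ℝ (p i s) (p j s) : ℝ) / ‖x i s - x j s‖) •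
            (x i s - x j s)‖
        ≤ ∑ j ∈ Finset.univ.erase i,
          ‖(K' ‖x i s - x j s‖ * (inner ℝ (p i s) (p j s) : ℝ) / ‖x i s - x j s‖) •
            (x i s - x j s)‖ := norm_sum_le _ _
      _ ≤ ∑ j ∈ Finset.univ.erase i,
          (|K' ‖x i s - x j s‖| * ‖p j s‖) * ‖p i s‖ := by
          apply Finset.sum_le_sum
          intro j hj
          have hr : (0:ℝ) < ‖x i s - x j s‖ := hrpos j hj s hsmem
          rw [norm_smul, Real.norm_eq_abs, abs_div, abs_of_pos hr, div_mul_cancel₀ _ hr.ne',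
            abs_mul]
          have hinner : |(inner ℝ (p i s) (p j s) : ℝ)| ≤ ‖p i s‖ * ‖p j s‖ :=
            abs_real_inner_le_norm _ _
          calc |K' ‖x i s - x j s‖| * |(inner ℝ (p i s) (p j s) : ℝ)|
              ≤ |K' ‖x i s - x j s‖| * (‖p i s‖ * ‖p j s‖) :=
                mul_le_mul_of_nonneg_left hinner (abs_nonneg _)
            _ = (|K' ‖x i s - x j s‖| * ‖p j s‖) * ‖p i s‖ := by ring
      _ = L s * ‖p i s‖ := by rw [hLdef, Finset.sum_mul]
      _ ≤ C * ‖p i s‖ :=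
          mul_le_mul_of_nonneg_right ((le_abs_self _).trans (hC s hsmem))
            (norm_nonneg _)
  have key := norm_le_gronwallBound_of_norm_deriv_right_le (δ := 0) (ε := 0) (K := C) hfc hfd
      (by simp [hi0]) hbnd t (Set.right_mem_Icc.2 ht0)
  rw [gronwallBound_ε0, zero_mul] at key
  exact norm_le_zero_iff.1 key
end

section
/- Consider the Hamiltonian system for n landmarks in ℝ^d given by dx_i/dt = Σ_j K(‖x_i − x_j‖) p_j and dp_i/dt = −Σ_{j≠i} K'(‖x_i − x_j‖) ((x_i − x_j)/‖x_i − x_j‖) ⟨p_i, p_j⟩ on [0,T). If the initial data satisfy p₁(0) = −p₂(0), p₃(0) = ⋯ = p_n(0) = 0, and x₁(0) = −x₂(0), then for all t ∈ [0,T): p₁(t) = −p₂(t) and x₁(t) = −x₂(t). -/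
open Set Filter Finset

/-- Symmetric initial data are preserved: if `p₁ 0 = -p₂ 0`, all other initial
momenta vanish, and `x₁ 0 = -x₂ 0`, then `p₁ t = -p₂ t` and `x₁ t = -x₂ t` for
all `t ∈ [0,T)` along the landmark Hamiltonian flow. -/
theorem symmetric_two_landmark_configuration_preserved
    (n d : ℕ) (K K' : ℝ → ℝ)
    (hKsmooth : ContDiffOn ℝ (⊤ : ℕ∞) K (Set.Ioi 0))
    (hK' : ∀ r > (0 : ℝ), HasDerivAt K (K' r) r)
    (T : ℝ) (hT : 0 < T)
    (x p : Fin n → ℝ → EuclideanSpace ℝ (Fin d))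
    (hsep : ∀ i j, i ≠ j → ∀ t ∈ Set.Ico (0 : ℝ) T, x i t ≠ x j t)
    (hx : ∀ i, ∀ t ∈ Set.Ico (0 : ℝ) T,
      HasDerivAt (x i) (∑ j, K ‖x i t - x j t‖ • p j t) t)
    (hp : ∀ i, ∀ t ∈ Set.Ico (0 : ℝ) T,
      HasDerivAt (p i)
        (-∑ j ∈ Finset.univ.erase i,
          (K' ‖x i t - x j t‖ * (inner ℝ (p i t) (p j t) : ℝ) / ‖x i t - x j t‖) •
            (x i t - x j t)) t)
    (i₁ i₂ : Fin n) (hne : i₁ ≠ i₂)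
    (hpinit : p i₁ 0 = -p i₂ 0)
    (hprest : ∀ j, j ≠ i₁ → j ≠ i₂ → p j 0 = 0)
    (hxinit : x i₁ 0 = -x i₂ 0) :
    ∀ t ∈ Set.Ico (0 : ℝ) T, p i₁ t = -p i₂ t ∧ x i₁ t = -x i₂ t := by
  classical
  have hK'cont : ContinuousOn K' (Set.Ioi 0) := by
    have h1 : ContinuousOn (deriv K) (Set.Ioi 0) :=
      hKsmooth.continuousOn_deriv_of_isOpen isOpen_Ioi (by simp)
    exact h1.congr fun r hr => ((hK' r hr).deriv).symm
  have hxc : ∀ i, ContinuousOn (x i) (Set.Ico 0 T) := fun i s hs =>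
    (hx i s hs).continuousAt.continuousWithinAt
  have hpc : ∀ i, ContinuousOn (p i) (Set.Ico 0 T) := fun i s hs =>
    (hp i s hs).continuousAt.continuousWithinAt
  -- bound on the norm of an interaction term
  have hterm : ∀ (a k : Fin n), a ≠ k → ∀ s ∈ Set.Ico (0:ℝ) T,
      ‖(K' ‖x a s - x k s‖ * (inner ℝ (p a s) (p k s) : ℝ) / ‖x a s - x k s‖) •
        (x a s - x k s)‖
        ≤ |K' ‖x a s - x k s‖| * (‖p a s‖ * ‖p k s‖) := by
    intro a k hak s hs
    have hnorm : ‖x a s - x k s‖ ≠ 0 :=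
      norm_ne_zero_iff.2 (sub_ne_zero.2 (hsep a k hak s hs))
    rw [norm_smul, Real.norm_eq_abs, abs_div, abs_norm, div_mul_cancel₀ _ hnorm, abs_mul]
    exact mul_le_mul_of_nonneg_left (abs_real_inner_le_norm _ _) (abs_nonneg _)
  -- momentum symmetry: p₁ + p₂ = 0 and all other momenta vanish, on [0, T)
  have key : ∀ b ∈ Set.Ico (0:ℝ) T,
      (p i₁ b + p i₂ b = 0) ∧ ∀ j, j ≠ i₁ → j ≠ i₂ → p j b = 0 := by
    intro b hb
    have hsub : Set.Icc (0:ℝ) b ⊆ Set.Ico 0 T :=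
      fun s hs => ⟨hs.1, lt_of_le_of_lt hs.2 hb.2⟩
    set g : ℝ → Fin n → EuclideanSpace ℝ (Fin d) := fun t j =>
      if j = i₁ then p i₁ t + p i₂ t else if j = i₂ then 0 else p j t with hgdef
    set g' : ℝ → Fin n → EuclideanSpace ℝ (Fin d) := fun t j =>
      if j = i₁ then
        (-∑ k ∈ Finset.univ.erase i₁,
            (K' ‖x i₁ t - x k t‖ * (inner ℝ (p i₁ t) (p k t) : ℝ) / ‖x i₁ t - x k t‖) •
              (x i₁ t - x k t)) +
        (-∑ k ∈ Finset.univ.erase i₂,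
            (K' ‖x i₂ t - x k t‖ * (inner ℝ (p i₂ t) (p k t) : ℝ) / ‖x i₂ t - x k t‖) •
              (x i₂ t - x k t))
      else if j = i₂ then 0
      else -∑ k ∈ Finset.univ.erase j,
          (K' ‖x j t - x k t‖ * (inner ℝ (p j t) (p k t) : ℝ) / ‖x j t - x k t‖) •
            (x j t - x k t) with hg'def
    have hgderiv : ∀ s ∈ Set.Ico (0:ℝ) T, HasDerivAt g (g' s) s := by
      intro s hs
      rw [hasDerivAt_pi]
      intro j
      by_cases h1 : j = i₁
      · subst h1
        simpa [hgdef, hg'def, Pi.add_def] using (hp j s hs).add (hp i₂ s hs)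
      · by_cases h2 : j = i₂
        · subst h2
          simpa [hgdef, hg'def, h1] using
            (hasDerivAt_const s (0 : EuclideanSpace ℝ (Fin d)))
        · simpa [hgdef, hg'def, h1, h2] using hp j s hs
    have hgcont : ContinuousOn g (Set.Icc 0 b) := by
      rw [continuousOn_pi]
      intro j
      by_cases h1 : j = i₁
      · subst h1
        simpa [hgdef, Pi.add_def] using ((hpc j).mono hsub).add ((hpc i₂).mono hsub)
      · by_cases h2 : j = i₂
        · subst h2
          simpa [hgdef, h1] using (continuousOn_const :
            ContinuousOn (fun _ : ℝ => (0 : EuclideanSpace ℝ (Fin d))) (Set.Icc 0 b))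
        · simpa [hgdef, h1, h2] using (hpc j).mono hsub
    set A : ℝ → ℝ := fun s => ∑ j, ∑ k ∈ Finset.univ.erase j, |K' ‖x j s - x k s‖|
      with hAdef
    set P : ℝ → ℝ := fun s => ∑ j, ‖p j s‖ with hPdef
    have hAnonneg : ∀ s, 0 ≤ A s := fun s => Finset.sum_nonneg fun j _ =>
      Finset.sum_nonneg fun k _ => abs_nonneg _
    have hPnonneg : ∀ s, 0 ≤ P s := fun s => Finset.sum_nonneg fun j _ => norm_nonneg _
    have hpleP : ∀ (a : Fin n) (s : ℝ), ‖p a s‖ ≤ P s := fun a s =>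
      Finset.single_le_sum (f := fun j => ‖p j s‖) (fun j _ => norm_nonneg _)
        (Finset.mem_univ a)
    have hrowleA : ∀ (a : Fin n) (s : ℝ),
        (∑ k ∈ Finset.univ.erase a, |K' ‖x a s - x k s‖|) ≤ A s := fun a s =>
      Finset.single_le_sum
        (f := fun j => ∑ k ∈ Finset.univ.erase j, |K' ‖x j s - x k s‖|)
        (fun j _ => Finset.sum_nonneg fun k _ => abs_nonneg _) (Finset.mem_univ a)
    have hCcont : ContinuousOn (fun s => A s * P s) (Set.Icc 0 b) := by
      apply ContinuousOn.mul
      · apply continuousOn_finset_sum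
        intro j _
        apply continuousOn_finset_sum
        intro k hk
        have hjk : j ≠ k := fun h => (Finset.mem_erase.1 hk).1 h.symm
        have hxdiff : ContinuousOn (fun s => ‖x j s - x k s‖) (Set.Icc 0 b) :=
          (((hxc j).mono hsub).sub ((hxc k).mono hsub)).norm
        exact (hK'cont.comp hxdiff fun s hs =>
          norm_pos_iff.2 (sub_ne_zero.2 (hsep j k hjk s (hsub hs)))).abs
      · exact continuousOn_finset_sum _ fun j _ => ((hpc j).mono hsub).norm
    obtain ⟨C₀, hC₀⟩ := isCompact_Icc.exists_bound_of_continuousOn hCcont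
    have hg0 : g 0 = 0 := by
      funext j
      by_cases h1 : j = i₁
      · simp [hgdef, h1, hpinit]
      · by_cases h2 : j = i₂
        · subst h2; simp [hgdef, h1]
        · simp [hgdef, h1, h2, hprest j h1 h2]
    have hbound : ∀ s ∈ Set.Ico (0:ℝ) b, ‖g' s‖ ≤ C₀ * ‖g s‖ + 0 := by
      intro s hs
      have hsI : s ∈ Set.Icc (0:ℝ) b := ⟨hs.1, le_of_lt hs.2⟩
      have hsT : s ∈ Set.Ico (0:ℝ) T := hsub hsI
      have hAPC : A s * P s ≤ C₀ := le_trans (le_abs_self _) (hC₀ s hsI)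
      have hC0nn : (0:ℝ) ≤ C₀ :=
        le_trans (mul_nonneg (hAnonneg s) (hPnonneg s)) hAPC
      have hG : (0:ℝ) ≤ ‖g s‖ := norm_nonneg _
      rw [add_zero, pi_norm_le_iff_of_nonneg (mul_nonneg hC0nn hG)]
      -- components of g are controlled by ‖g s‖
      have hgcomp : ∀ k : Fin n, k ≠ i₁ → k ≠ i₂ → ‖p k s‖ ≤ ‖g s‖ := by
        intro k h1 h2
        have hk : p k s = g s k := by simp [hgdef, h1, h2]
        rw [hk]; exact norm_le_pi_norm _ k
      -- per-term estimate when one of the two indices is neither i₁ nor i₂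
      have htermsmall : ∀ a k : Fin n, a ≠ k →
          (a ≠ i₁ ∧ a ≠ i₂) ∨ (k ≠ i₁ ∧ k ≠ i₂) →
          ‖(K' ‖x a s - x k s‖ * (inner ℝ (p a s) (p k s) : ℝ) / ‖x a s - x k s‖) •
            (x a s - x k s)‖ ≤ |K' ‖x a s - x k s‖| * (P s * ‖g s‖) := by
        intro a k hak hcase
        refine le_trans (hterm a k hak s hsT) (mul_le_mul_of_nonneg_left ?_ (abs_nonneg _))
        rcases hcase with ⟨ha1, ha2⟩ | ⟨hk1, hk2⟩
        · calc ‖p a s‖ * ‖p k s‖ ≤ ‖g s‖ * P s :=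
                mul_le_mul (hgcomp a ha1 ha2) (hpleP k s) (norm_nonneg _) hG
            _ = P s * ‖g s‖ := mul_comm _ _
        · exact mul_le_mul (hpleP a s) (hgcomp k hk1 hk2) (norm_nonneg _) (hPnonneg s)
      intro j
      by_cases h1 : j = i₁
      · -- the symmetric component: the (i₁,i₂) and (i₂,i₁) terms cancel
        subst h1
        have hmem1 : i₂ ∈ Finset.univ.erase j := Finset.mem_erase.2 ⟨(Ne.symm hne), Finset.mem_univ _⟩
        have hmem2 : j ∈ Finset.univ.erase i₂ := Finset.mem_erase.2 ⟨hne, Finset.mem_univ _⟩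
        have hsplit1 : (∑ k ∈ Finset.univ.erase j,
            (K' ‖x j s - x k s‖ * (inner ℝ (p j s) (p k s) : ℝ) / ‖x j s - x k s‖) •
              (x j s - x k s)) =
            (K' ‖x j s - x i₂ s‖ * (inner ℝ (p j s) (p i₂ s) : ℝ) / ‖x j s - x i₂ s‖) •
              (x j s - x i₂ s) +
            ∑ k ∈ (Finset.univ.erase j).erase i₂,
              (K' ‖x j s - x k s‖ * (inner ℝ (p j s) (p k s) : ℝ) / ‖x j s - x k s‖) •
                (x j s - x k s) :=
          (Finset.add_sum_erase _ _ hmem1).symm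
        have hsplit2 : (∑ k ∈ Finset.univ.erase i₂,
            (K' ‖x i₂ s - x k s‖ * (inner ℝ (p i₂ s) (p k s) : ℝ) / ‖x i₂ s - x k s‖) •
              (x i₂ s - x k s)) =
            (K' ‖x i₂ s - x j s‖ * (inner ℝ (p i₂ s) (p j s) : ℝ) / ‖x i₂ s - x j s‖) •
              (x i₂ s - x j s) +
            ∑ k ∈ (Finset.univ.erase i₂).erase j,
              (K' ‖x i₂ s - x k s‖ * (inner ℝ (p i₂ s) (p k s) : ℝ) / ‖x i₂ s - x k s‖) •
                (x i₂ s - x k s) :=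
          (Finset.add_sum_erase _ _ hmem2).symm
        have hcancel :
            (K' ‖x i₂ s - x j s‖ * (inner ℝ (p i₂ s) (p j s) : ℝ) / ‖x i₂ s - x j s‖) •
              (x i₂ s - x j s) =
            -((K' ‖x j s - x i₂ s‖ * (inner ℝ (p j s) (p i₂ s) : ℝ) / ‖x j s - x i₂ s‖) •
              (x j s - x i₂ s)) := by
          have h1 : x i₂ s - x j s = -(x j s - x i₂ s) := by abel
          rw [norm_sub_rev (x i₂ s) (x j s), real_inner_comm (p i₂ s) (p j s), h1, smul_neg]
        have hval : g' s j =
            -((∑ k ∈ (Finset.univ.erase j).erase i₂,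
              (K' ‖x j s - x k s‖ * (inner ℝ (p j s) (p k s) : ℝ) / ‖x j s - x k s‖) •
                (x j s - x k s)) +
              ∑ k ∈ (Finset.univ.erase i₂).erase j,
              (K' ‖x i₂ s - x k s‖ * (inner ℝ (p i₂ s) (p k s) : ℝ) / ‖x i₂ s - x k s‖) •
                (x i₂ s - x k s)) := by
          show (if j = j then _ else _) = _
          rw [if_pos rfl, hsplit1, hsplit2, hcancel]
          abel
        rw [hval, norm_neg]
        have hb1 : ‖∑ k ∈ (Finset.univ.erase j).erase i₂,
            (K' ‖x j s - x k s‖ * (inner ℝ (p j s) (p k s) : ℝ) / ‖x j s - x k s‖) •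
              (x j s - x k s)‖ ≤
            (∑ k ∈ (Finset.univ.erase j).erase i₂, |K' ‖x j s - x k s‖|) * (P s * ‖g s‖) := by
          rw [Finset.sum_mul]
          refine le_trans (norm_sum_le _ _) (Finset.sum_le_sum fun k hk => ?_)
          have hk2 := Finset.mem_erase.1 hk
          have hk1 := Finset.mem_erase.1 hk2.2
          exact htermsmall j k (Ne.symm hk1.1) (Or.inr ⟨hk1.1, hk2.1⟩)
        have hb2 : ‖∑ k ∈ (Finset.univ.erase i₂).erase j,
            (K' ‖x i₂ s - x k s‖ * (inner ℝ (p i₂ s) (p k s) : ℝ) / ‖x i₂ s - x k s‖) •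
              (x i₂ s - x k s)‖ ≤
            (∑ k ∈ (Finset.univ.erase i₂).erase j, |K' ‖x i₂ s - x k s‖|) * (P s * ‖g s‖) := by
          rw [Finset.sum_mul]
          refine le_trans (norm_sum_le _ _) (Finset.sum_le_sum fun k hk => ?_)
          have hk1 := Finset.mem_erase.1 hk
          have hk2 := Finset.mem_erase.1 hk1.2
          exact htermsmall i₂ k (Ne.symm hk2.1) (Or.inr ⟨hk1.1, hk2.1⟩)
        have hsumrows :
            (∑ k ∈ (Finset.univ.erase j).erase i₂, |K' ‖x j s - x k s‖|) +
            (∑ k ∈ (Finset.univ.erase i₂).erase j, |K' ‖x i₂ s - x k s‖|) ≤ A s := by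
          have e1 : (∑ k ∈ (Finset.univ.erase j).erase i₂, |K' ‖x j s - x k s‖|) ≤
              ∑ k ∈ Finset.univ.erase j, |K' ‖x j s - x k s‖| :=
            Finset.sum_le_sum_of_subset_of_nonneg (Finset.erase_subset _ _)
              (fun k _ _ => abs_nonneg _)
          have e2 : (∑ k ∈ (Finset.univ.erase i₂).erase j, |K' ‖x i₂ s - x k s‖|) ≤
              ∑ k ∈ Finset.univ.erase i₂, |K' ‖x i₂ s - x k s‖| :=
            Finset.sum_le_sum_of_subset_of_nonneg (Finset.erase_subset _ _)
              (fun k _ _ => abs_nonneg _)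
          have e3 : (∑ k ∈ Finset.univ.erase j, |K' ‖x j s - x k s‖|) +
              (∑ k ∈ Finset.univ.erase i₂, |K' ‖x i₂ s - x k s‖|) ≤ A s := by
            have hmem : i₂ ∈ Finset.univ.erase j :=
              Finset.mem_erase.2 ⟨Ne.symm hne, Finset.mem_univ _⟩
            calc (∑ k ∈ Finset.univ.erase j, |K' ‖x j s - x k s‖|) +
                (∑ k ∈ Finset.univ.erase i₂, |K' ‖x i₂ s - x k s‖|)
                ≤ (∑ k ∈ Finset.univ.erase j, |K' ‖x j s - x k s‖|) +
                  ∑ j' ∈ Finset.univ.erase j,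
                    ∑ k ∈ Finset.univ.erase j', |K' ‖x j' s - x k s‖| := by
                  refine add_le_add (le_refl _) (Finset.single_le_sum
                    (f := fun j' => ∑ k ∈ Finset.univ.erase j', |K' ‖x j' s - x k s‖|)
                    (fun j' _ => Finset.sum_nonneg fun k _ => abs_nonneg _) hmem)
              _ = A s := Finset.add_sum_erase Finset.univ
                  (fun j' => ∑ k ∈ Finset.univ.erase j', |K' ‖x j' s - x k s‖|)
                  (Finset.mem_univ j)
          linarith
        calc ‖(∑ k ∈ (Finset.univ.erase j).erase i₂,
              (K' ‖x j s - x k s‖ * (inner ℝ (p j s) (p k s) : ℝ) / ‖x j s - x k s‖) •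
                (x j s - x k s)) +
              ∑ k ∈ (Finset.univ.erase i₂).erase j,
              (K' ‖x i₂ s - x k s‖ * (inner ℝ (p i₂ s) (p k s) : ℝ) / ‖x i₂ s - x k s‖) •
                (x i₂ s - x k s)‖
            ≤ (∑ k ∈ (Finset.univ.erase j).erase i₂, |K' ‖x j s - x k s‖|) * (P s * ‖g s‖) +
              (∑ k ∈ (Finset.univ.erase i₂).erase j, |K' ‖x i₂ s - x k s‖|) * (P s * ‖g s‖) :=
              le_trans (norm_add_le _ _) (add_le_add hb1 hb2)
          _ = ((∑ k ∈ (Finset.univ.erase j).erase i₂, |K' ‖x j s - x k s‖|) +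
              (∑ k ∈ (Finset.univ.erase i₂).erase j, |K' ‖x i₂ s - x k s‖|)) * (P s * ‖g s‖) :=
              (add_mul _ _ _).symm
          _ ≤ A s * (P s * ‖g s‖) :=
              mul_le_mul_of_nonneg_right hsumrows (mul_nonneg (hPnonneg s) hG)
          _ = (A s * P s) * ‖g s‖ := by ring
          _ ≤ C₀ * ‖g s‖ := mul_le_mul_of_nonneg_right hAPC hG
      · by_cases h2 : j = i₂
        · subst h2
          have : g' s j = 0 := by simp [hg'def, h1]
          rw [this]
          simpa using mul_nonneg hC0nn hG
        · -- generic component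
          have hval : g' s j = -∑ k ∈ Finset.univ.erase j,
              (K' ‖x j s - x k s‖ * (inner ℝ (p j s) (p k s) : ℝ) / ‖x j s - x k s‖) •
                (x j s - x k s) := by simp [hg'def, h1, h2]
          rw [hval, norm_neg]
          calc ‖∑ k ∈ Finset.univ.erase j,
              (K' ‖x j s - x k s‖ * (inner ℝ (p j s) (p k s) : ℝ) / ‖x j s - x k s‖) •
                (x j s - x k s)‖
              ≤ (∑ k ∈ Finset.univ.erase j, |K' ‖x j s - x k s‖|) * (P s * ‖g s‖) := by
                rw [Finset.sum_mul]
                refine le_trans (norm_sum_le _ _) (Finset.sum_le_sum fun k hk => ?_)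
                exact htermsmall j k (Ne.symm (Finset.mem_erase.1 hk).1) (Or.inl ⟨h1, h2⟩)
            _ ≤ A s * (P s * ‖g s‖) :=
                mul_le_mul_of_nonneg_right (hrowleA j s) (mul_nonneg (hPnonneg s) hG)
            _ = (A s * P s) * ‖g s‖ := by ring
            _ ≤ C₀ * ‖g s‖ := mul_le_mul_of_nonneg_right hAPC hG
    have hgron := norm_le_gronwallBound_of_norm_deriv_right_le hgcont
      (fun s hs => (hgderiv s (hsub ⟨hs.1, le_of_lt hs.2⟩)).hasDerivWithinAt)
      (show ‖g 0‖ ≤ 0 by rw [hg0]; simp) hbound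
    have hgb : g b = 0 := by
      have h := hgron b ⟨hb.1, le_refl b⟩
      rw [gronwallBound_ε0_δ0] at h
      exact norm_le_zero_iff.1 h
    constructor
    · have := congrFun hgb i₁
      simpa [hgdef] using this
    · intro j hj1 hj2
      have := congrFun hgb j
      simpa [hgdef, hj1, hj2] using this
  -- position part
  have hxpart : ∀ t ∈ Set.Ico (0:ℝ) T, x i₁ t + x i₂ t = 0 := by
    intro t ht
    have hsub : Set.Icc (0:ℝ) t ⊆ Set.Ico 0 T :=
      fun s hs => ⟨hs.1, lt_of_le_of_lt hs.2 ht.2⟩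
    have hcont : ContinuousOn (fun s => x i₁ s + x i₂ s) (Set.Icc 0 t) :=
      ((hxc i₁).mono hsub).add ((hxc i₂).mono hsub)
    have hderiv : ∀ s ∈ Set.Ico (0:ℝ) t,
        HasDerivWithinAt (fun s => x i₁ s + x i₂ s) 0 (Set.Ici s) s := by
      intro s hs
      have hsT : s ∈ Set.Ico (0:ℝ) T := ⟨hs.1, lt_trans hs.2 ht.2⟩
      have hd := (hx i₁ s hsT).add (hx i₂ s hsT)
      have hk := key s hsT
      have hreduce : ∀ a : Fin n, (∑ j, K ‖x a s - x j s‖ • p j s) =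
          K ‖x a s - x i₁ s‖ • p i₁ s + K ‖x a s - x i₂ s‖ • p i₂ s := by
        intro a
        rw [← Finset.sum_subset (Finset.subset_univ ({i₁, i₂} : Finset (Fin n)))
          (fun j _ hj => by
            simp only [Finset.mem_insert, Finset.mem_singleton, not_or] at hj
            rw [hk.2 j hj.1 hj.2, smul_zero])]
        rw [Finset.sum_pair hne]
      have hp2 : p i₂ s = -p i₁ s := eq_neg_of_add_eq_zero_right hk.1
      have hzero : (∑ j, K ‖x i₁ s - x j s‖ • p j s) +
          (∑ j, K ‖x i₂ s - x j s‖ • p j s) = 0 := by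
        rw [hreduce i₁, hreduce i₂, hp2, sub_self, sub_self, norm_zero,
          norm_sub_rev (x i₂ s) (x i₁ s), smul_neg, smul_neg]
        abel
      rw [hzero] at hd
      exact hd.hasDerivWithinAt
    have hconst := constant_of_has_deriv_right_zero hcont hderiv t ⟨ht.1, le_refl t⟩
    have h0 : x i₁ t + x i₂ t = x i₁ 0 + x i₂ 0 := hconst
    rw [h0, hxinit]
    abel
  intro t ht
  exact ⟨eq_neg_of_add_eq_zero_left (key t ht).1,
    eq_neg_of_add_eq_zero_left (hxpart t ht)⟩
end

section
/- Consider the reduced two-landmark system du/dt = 2(K(0) − K(r)) Q, dQ/dt = (K'(r)/r) u (‖Q‖² − c) with r = ‖u‖ > 0, K strictly decreasing and smooth on (0,∞), c ≥ 0. Suppose the conserved quantity D = (K(0) − K(r(t)))(‖Q(t)‖² − c) satisfies D ≤ 0 and the conserved angular momentum magnitude ω = ‖u ∧ Q‖ is nonzero. Then r(t)² ≥ ω²/c > 0 for all t ∈ [0,T); in particular, r(t) is bounded away from zero and the two landmarks cannot collide. -/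
open Set Filter Finset

lemma lagrange_le (d : ℕ) (a b : Fin d → ℝ) :
    (∑ pr ∈ Finset.univ.filter (fun pr : Fin d × Fin d => pr.1 < pr.2),
      (a pr.1 * b pr.2 - a pr.2 * b pr.1) ^ 2)
    ≤ (∑ i, a i ^ 2) * (∑ i, b i ^ 2) := by
  set f : Fin d × Fin d → ℝ := fun pr => (a pr.1 * b pr.2 - a pr.2 * b pr.1) ^ 2 with hf
  have hS : ∑ pr : Fin d × Fin d, f pr
      = 2 * ((∑ i, a i ^ 2) * (∑ i, b i ^ 2)) - 2 * (∑ i, a i * b i) ^ 2 := by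
    rw [← Finset.univ_product_univ, Finset.sum_product]
    have e1 : (∑ i, a i ^ 2) * (∑ j, b j ^ 2) = ∑ i, ∑ j, a i ^ 2 * b j ^ 2 :=
      Finset.sum_mul_sum _ _ _ _
    have e2 : (∑ i, b i ^ 2) * (∑ j, a j ^ 2) = ∑ i, ∑ j, b i ^ 2 * a j ^ 2 :=
      Finset.sum_mul_sum _ _ _ _
    have e3 : (∑ i, a i * b i) * (∑ j, a j * b j) = ∑ i, ∑ j, (a i * b i) * (a j * b j) :=
      Finset.sum_mul_sum _ _ _ _
    have key : ∀ i, ∑ j, f (i, j)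
        = (∑ j, a i ^ 2 * b j ^ 2) + (∑ j, b i ^ 2 * a j ^ 2)
          - 2 * ∑ j, (a i * b i) * (a j * b j) := by
      intro i
      have h2 : (∑ j, a i ^ 2 * b j ^ 2) + (∑ j, b i ^ 2 * a j ^ 2)
          - 2 * ∑ j, (a i * b i) * (a j * b j)
          = ∑ j, (a i ^ 2 * b j ^ 2 + b i ^ 2 * a j ^ 2
            - 2 * ((a i * b i) * (a j * b j))) := by
        rw [Finset.mul_sum, ← Finset.sum_add_distrib, ← Finset.sum_sub_distrib]
      rw [h2]
      refine Finset.sum_congr rfl fun j _ => ?_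
      simp only [hf]; ring
    rw [Finset.sum_congr rfl fun i _ => key i]
    rw [Finset.sum_sub_distrib, Finset.sum_add_distrib, ← Finset.mul_sum,
      ← e1, ← e2, ← e3]
    ring
  have hgt : ∑ pr ∈ Finset.univ.filter (fun pr : Fin d × Fin d => pr.2 < pr.1), f pr
      = ∑ pr ∈ Finset.univ.filter (fun pr : Fin d × Fin d => pr.1 < pr.2), f pr := by
    refine Finset.sum_equiv (Equiv.prodComm _ _) ?_ ?_
    · rintro ⟨i, j⟩; simp
    · rintro ⟨i, j⟩ _; simp only [hf, Equiv.prodComm_apply, Prod.swap]; ring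
  have hnot : ∑ pr ∈ Finset.univ.filter (fun pr : Fin d × Fin d => ¬ pr.1 < pr.2), f pr
      = ∑ pr ∈ Finset.univ.filter (fun pr : Fin d × Fin d => pr.2 < pr.1), f pr := by
    symm
    apply Finset.sum_subset
    · intro pr hpr; simp only [Finset.mem_filter, Finset.mem_univ, true_and] at hpr ⊢; omega
    · intro pr h1 h2
      simp only [Finset.mem_filter, Finset.mem_univ, true_and, not_lt] at h1 h2
      have : pr.1 = pr.2 := le_antisymm h2 h1
      simp only [hf, this]; ring
  have hsplit := Finset.sum_filter_add_sum_filter_not Finset.univ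
    (fun pr : Fin d × Fin d => pr.1 < pr.2) f
  nlinarith [sq_nonneg (∑ i, a i * b i)]


/-- Case `D ≤ 0` with nonzero angular momentum: the landmark separation is
bounded below by `ω²/c > 0`, so the two landmarks cannot collide. -/
theorem no_collision_nonpositive_D (d : ℕ) (K K' : ℝ → ℝ)
    (hKcont : ContinuousOn K (Set.Ici 0))
    (hKanti : StrictAntiOn K (Set.Ici 0))
    (hKsmooth : ContDiffOn ℝ (⊤ : ℕ∞) K (Set.Ioi 0))
    (hK' : ∀ r > (0 : ℝ), HasDerivAt K (K' r) r)
    (c : ℝ) (hc : 0 ≤ c) (T : ℝ) (hT : 0 < T)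
    (u Q : ℝ → EuclideanSpace ℝ (Fin d))
    (hupos : ∀ t ∈ Set.Ico (0 : ℝ) T, 0 < ‖u t‖)
    (hu : ∀ t ∈ Set.Ico (0 : ℝ) T,
      HasDerivAt u ((2 * (K 0 - K ‖u t‖)) • Q t) t)
    (hQ : ∀ t ∈ Set.Ico (0 : ℝ) T,
      HasDerivAt Q ((K' ‖u t‖ / ‖u t‖ * (‖Q t‖ ^ 2 - c)) • u t) t)
    (D : ℝ) (hD : ∀ t ∈ Set.Ico (0 : ℝ) T,
      (K 0 - K ‖u t‖) * (‖Q t‖ ^ 2 - c) = D)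
    (hDle : D ≤ 0)
    (ω : ℝ) (hω : ∀ t ∈ Set.Ico (0 : ℝ) T,
      (∑ pr ∈ Finset.univ.filter (fun pr : Fin d × Fin d => pr.1 < pr.2),
        (u t pr.1 * Q t pr.2 - u t pr.2 * Q t pr.1) ^ 2) = ω ^ 2)
    (hωne : ω ≠ 0) :
    0 < ω ^ 2 / c ∧ ∀ t ∈ Set.Ico (0 : ℝ) T, ω ^ 2 / c ≤ ‖u t‖ ^ 2 := by
  have hnorm : ∀ (x : EuclideanSpace ℝ (Fin d)), ‖x‖ ^ 2 = ∑ i, x i ^ 2 := by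
    intro x
    rw [EuclideanSpace.norm_eq, Real.sq_sqrt (Finset.sum_nonneg fun i _ => sq_nonneg _)]
    simp [Real.norm_eq_abs, sq_abs]
  have key : ∀ t ∈ Set.Ico (0 : ℝ) T, ω ^ 2 ≤ ‖u t‖ ^ 2 * c := by
    intro t ht
    have hr : 0 < ‖u t‖ := hupos t ht
    have hK0 : K ‖u t‖ < K 0 :=
      hKanti (Set.self_mem_Ici) (Set.mem_Ici.2 hr.le) hr
    have hQle : ‖Q t‖ ^ 2 ≤ c := by nlinarith [hD t ht]
    have hL := lagrange_le d (u t) (Q t)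
    rw [hω t ht, ← hnorm, ← hnorm] at hL
    nlinarith [sq_nonneg ‖u t‖]
  have h0 : (0 : ℝ) ∈ Set.Ico (0 : ℝ) T := ⟨le_refl _, hT⟩
  have hω2 : 0 < ω ^ 2 := by positivity
  have hc' : 0 < c := by
    rcases hc.lt_or_eq with h | h
    · exact h
    · exfalso; have := key 0 h0; nlinarith
  refine ⟨div_pos hω2 hc', fun t ht => ?_⟩
  rw [div_le_iff₀ hc']
  exact key t ht
end
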